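/- Let (L,[-,-],{-,-,-},R) be a modified Rota-Baxter Lie-Yamaguti algebra. Define new operations [x,y]_R := [Rx,y] + [x,Ry] and {x,y,z}_R := {x,Ry,Rz} + {Rx,y,Rz} + {Rx,Ry,z} + {x,y,z} for all x,y,z in L. Then (L, [-,-]_R, {-,-,-}_R) is a Lie-Yamaguti algebra (denoted L_R). -/

import Mathlib

/-- A Lie-Yamaguti algebra: bilinear bracket `br`, trilinear bracket `tr`,
satisfying (LY1)-(LY6). -/
structure LieYamaguti (K : Type*) (L : Type*) [Field K] [AddCommGroup L] [Module K L] where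
  br : L →ₗ[K] L →ₗ[K] L
  tr : L →ₗ[K] L →ₗ[K] L →ₗ[K] L
  ly1 : ∀ x y, br x y = - br y x
  ly2 : ∀ x y z, tr x y z = - tr y x z
  ly3 : ∀ x y z,
    br (br x y) z + br (br y z) x + br (br z x) y + tr x y z + tr y z x + tr z x y = 0
  ly4 : ∀ x y z a, tr (br x y) z a + tr (br z x) y a + tr (br y z) x a = 0
  ly5 : ∀ a b x y, tr a b (br x y) = br (tr a b x) y + br x (tr a b y)
  ly6 : ∀ a b x y z,
    tr a b (tr x y z) = tr (tr a b x) y z + tr x (tr a b y) z + tr x y (tr a b z)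

/-- A modified Rota-Baxter operator on a Lie-Yamaguti algebra. -/
def IsMRB {K L : Type*} [Field K] [AddCommGroup L] [Module K L]
    (A : LieYamaguti K L) (R : L →ₗ[K] L) : Prop :=
  (∀ x y, A.br (R x) (R y) = R (A.br (R x) y + A.br x (R y)) - A.br x y) ∧
  (∀ x y z, A.tr (R x) (R y) (R z) =
      R (A.tr x (R y) (R z) + A.tr (R x) y (R z) + A.tr (R x) (R y) z + A.tr x y z)
      - A.tr (R x) y z - A.tr x (R y) z - A.tr x y (R z))

/-!
The modified Rota-Baxter identities, read as `R [x,y]_R = [Rx,Ry] + [x,y]` and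
`R {x,y,z}_R = {Rx,Ry,Rz} + {Rx,y,z} + {x,Ry,z} + {x,y,Rz}`, remove every `R` applied to a
descendent bracket. Each axiom of `L_R` then expands into brackets of `L` with `R` applied to some
of the arguments, and the expansion is a sum of instances of the same axiom of `L` at arguments
of the form `x` or `R x`.
-/

namespace LieYamaguti

variable {K L : Type*} [Field K] [AddCommGroup L] [Module K L] (A : LieYamaguti K L)
  (R : L →ₗ[K] L)

def descendentBr : L →ₗ[K] L →ₗ[K] L :=
  A.br ∘ₗ R + A.br.compl₂ R

def descendentTr : L →ₗ[K] L →ₗ[K] L →ₗ[K] L :=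
  (A.tr.compl₂ R).compr₂ (LinearMap.lcomp K L R) + (A.tr ∘ₗ R).compr₂ (LinearMap.lcomp K L R)
    + (A.tr ∘ₗ R).compl₂ R + A.tr

@[simp]
theorem descendentBr_apply (x y : L) :
    A.descendentBr R x y = A.br (R x) y + A.br x (R y) :=
  rfl

@[simp]
theorem descendentTr_apply (x y z : L) :
    A.descendentTr R x y z
      = A.tr x (R y) (R z) + A.tr (R x) y (R z) + A.tr (R x) (R y) z + A.tr x y z :=
  rfl

theorem descendentBr_antisymm (x y : L) :
    A.descendentBr R x y = -A.descendentBr R y x := by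
  simp only [descendentBr_apply]
  rw [A.ly1 (R x) y, A.ly1 x (R y)]
  abel

theorem descendentTr_antisymm (x y z : L) :
    A.descendentTr R x y z = -A.descendentTr R y x z := by
  simp only [descendentTr_apply]
  rw [A.ly2 x (R y) (R z), A.ly2 (R x) y (R z), A.ly2 (R x) (R y) z, A.ly2 x y z]
  abel

end LieYamaguti

namespace IsMRB

open LieYamaguti

variable {K L : Type*} [Field K] [AddCommGroup L] [Module K L] {A : LieYamaguti K L}
  {R : L →ₗ[K] L}

theorem map_descendentBr (hR : IsMRB A R) (x y : L) :
    R (A.descendentBr R x y) = A.br (R x) (R y) + A.br x y := by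
  rw [descendentBr_apply, hR.1 x y, sub_add_cancel]

theorem map_descendentTr (hR : IsMRB A R) (x y z : L) :
    R (A.descendentTr R x y z)
      = A.tr (R x) (R y) (R z) + A.tr (R x) y z + A.tr x (R y) z + A.tr x y (R z) := by
  rw [descendentTr_apply, hR.2 x y z]
  abel

theorem descendent_ly3 (hR : IsMRB A R) (x y z : L) :
    A.descendentBr R (A.descendentBr R x y) z + A.descendentBr R (A.descendentBr R y z) x
        + A.descendentBr R (A.descendentBr R z x) y + A.descendentTr R x y z
        + A.descendentTr R y z x + A.descendentTr R z x y = 0 := by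
  -- `↓` rewrites top-down, so `map_descendentBr` sees `R` applied to an inner bracket before
  -- that bracket is unfolded.
  simp only [↓hR.map_descendentBr, ↓descendentBr_apply, descendentTr_apply, map_add,
    LinearMap.add_apply]
  linear_combination (norm := module)
    A.ly3 x y z + A.ly3 (R x) (R y) z + A.ly3 x (R y) (R z) + A.ly3 (R x) y (R z)

theorem descendent_ly4 (hR : IsMRB A R) (x y z a : L) :
    A.descendentTr R (A.descendentBr R x y) z a + A.descendentTr R (A.descendentBr R z x) y a
        + A.descendentTr R (A.descendentBr R y z) x a = 0 := by
  simp only [↓hR.map_descendentBr, ↓descendentBr_apply, ↓descendentTr_apply, map_add,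
    LinearMap.add_apply]
  linear_combination (norm := module)
    A.ly4 x y z (R a) + A.ly4 (R x) (R y) z (R a) + A.ly4 x (R y) (R z) (R a)
      + A.ly4 (R x) y (R z) (R a) + A.ly4 (R x) (R y) (R z) a + A.ly4 x y (R z) a
      + A.ly4 (R x) y z a + A.ly4 x (R y) z a

theorem descendent_ly5 (hR : IsMRB A R) (a b x y : L) :
    A.descendentTr R a b (A.descendentBr R x y)
      = A.descendentBr R (A.descendentTr R a b x) y
        + A.descendentBr R x (A.descendentTr R a b y) := by
  simp only [↓hR.map_descendentBr, ↓hR.map_descendentTr, ↓descendentBr_apply,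
    ↓descendentTr_apply, map_add, LinearMap.add_apply]
  linear_combination (norm := module)
    A.ly5 a (R b) (R x) (R y) + A.ly5 a (R b) x y + A.ly5 (R a) b (R x) (R y)
      + A.ly5 (R a) b x y + A.ly5 (R a) (R b) (R x) y + A.ly5 (R a) (R b) x (R y)
      + A.ly5 a b (R x) y + A.ly5 a b x (R y)

set_option maxHeartbeats 1000000 in
theorem descendent_ly6 (hR : IsMRB A R) (a b x y z : L) :
    A.descendentTr R a b (A.descendentTr R x y z)
      = A.descendentTr R (A.descendentTr R a b x) y z
        + A.descendentTr R x (A.descendentTr R a b y) z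
        + A.descendentTr R x y (A.descendentTr R a b z) := by
  simp only [↓hR.map_descendentTr, ↓descendentTr_apply, map_add, LinearMap.add_apply]
  linear_combination (norm := module)
    A.ly6 a b x (R y) (R z) + A.ly6 a b (R x) y (R z) + A.ly6 a b (R x) (R y) z
      + A.ly6 a b x y z + A.ly6 a (R b) (R x) (R y) (R z) + A.ly6 a (R b) (R x) y z
      + A.ly6 a (R b) x (R y) z + A.ly6 a (R b) x y (R z)
      + A.ly6 (R a) b (R x) (R y) (R z) + A.ly6 (R a) b (R x) y z
      + A.ly6 (R a) b x (R y) z + A.ly6 (R a) b x y (R z)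
      + A.ly6 (R a) (R b) x (R y) (R z) + A.ly6 (R a) (R b) (R x) y (R z)
      + A.ly6 (R a) (R b) (R x) (R y) z + A.ly6 (R a) (R b) x y z

def descendent (hR : IsMRB A R) : LieYamaguti K L where
  br := A.descendentBr R
  tr := A.descendentTr R
  ly1 := A.descendentBr_antisymm R
  ly2 := A.descendentTr_antisymm R
  ly3 := hR.descendent_ly3
  ly4 := hR.descendent_ly4
  ly5 := hR.descendent_ly5
  ly6 := hR.descendent_ly6

end IsMRB

theorem descendent_isLieYamaguti_general (K L : Type*) [Field K]
    [AddCommGroup L] [Module K L]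
    (A : LieYamaguti K L) (R : L →ₗ[K] L) (hR : IsMRB A R) :
    ∃ B : LieYamaguti K L,
      (∀ x y, B.br x y = A.br (R x) y + A.br x (R y)) ∧
      (∀ x y z, B.tr x y z
          = A.tr x (R y) (R z) + A.tr (R x) y (R z) + A.tr (R x) (R y) z + A.tr x y z) :=
  ⟨hR.descendent, A.descendentBr_apply R, A.descendentTr_apply R⟩

/-- The descendent structure: if `(L,R)` is a modified Rota-Baxter Lie-Yamaguti algebra,
then `[x,y]_R := [Rx,y] + [x,Ry]` and
`{x,y,z}_R := {x,Ry,Rz} + {Rx,y,Rz} + {Rx,Ry,z} + {x,y,z}` give a Lie-Yamaguti algebra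
structure `L_R` on `L`. -/
theorem descendent_isLieYamaguti (K L : Type*) [Field K] [CharZero K]
    [AddCommGroup L] [Module K L]
    (A : LieYamaguti K L) (R : L →ₗ[K] L) (hR : IsMRB A R) :
    ∃ B : LieYamaguti K L,
      (∀ x y, B.br x y = A.br (R x) y + A.br x (R y)) ∧
      (∀ x y z, B.tr x y z
          = A.tr x (R y) (R z) + A.tr (R x) y (R z) + A.tr (R x) (R y) z + A.tr x y z) :=
  descendent_isLieYamaguti_general K L A R hR
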